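/- With p_n defined by p_1(x)=0, p_2(x)=x/15, and (2n+1)p_n(x)=(2n-3)p_{n-1}(x)-(x/(2n-1))p_{n-2}(x), the infinite series ∑_{n=2}^∞ p_n(π²) converges and equals 1. -/

import Mathlib

open Real

/-- `p_n(x)` defined by the recurrence
`(2n+1) p_n(x) = (2n-3) p_{n-1}(x) - (x/(2n-1)) p_{n-2}(x)` for `n ≥ 3`,
with `p_1(x) = 0` and `p_2(x) = x/15`. -/
noncomputable def p : ℕ → ℝ → ℝ
  | 0, _ => 0
  | 1, _ => 0
  | 2, x => x / 15
  | (n+3), x =>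
      ((2*((n : ℝ)+3)-3) * p (n+2) x - (x / (2*((n : ℝ)+3)-1)) * p (n+1) x) / (2*((n : ℝ)+3)+1)

/-!
At `x = π²` the recurrence for `p` becomes, after dividing by `π^(m+2) / (2m+3)!!`, the three-term
recurrence `z j_{m+2}(z) = (2m+3) j_{m+1}(z) - z j_m(z)` of the spherical Bessel functions, with
matching initial values `j_0(π) = sin π / π = 0` and `j_1(π) = (sin π - π cos π) / π² = 1 / π`.
Hence `p_{m+1}(π²) = π^(m+2) j_m(π) / (2m+3)!!`, and the power series of `j_m` gives
`|p_{m+1}(π²)| ≤ e^{π²/2} π^{2m+2} / (2m+3)!!`. For every `x ≠ 0` the partial sums telescope,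
`∑_{n=2}^{N+1} p_n(x) = 1 - (2N+5)(2N+7) p_{N+3}(x) / x`, and at `x = π²` the remainder tends to `0`
by the bound.
-/

open Filter Finset
open scoped Nat Topology

lemma Nat.factorial_le_doubleFactorial_two_mul_add_one (m : ℕ) : m ! ≤ (2 * m + 1)‼ := by
  induction m with
  | zero => rfl
  | succ m ih =>
    rw [Nat.factorial_succ, show 2 * (m + 1) + 1 = 2 * m + 1 + 2 by ring,
      Nat.doubleFactorial_add_two]
    exact Nat.mul_le_mul (by omega) ih

lemma summable_pow_div_doubleFactorial (c : ℝ) :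
    Summable fun m : ℕ ↦ c ^ m / (2 * m + 1)‼ := by
  refine .of_norm_bounded (Real.summable_pow_div_factorial |c|) fun m ↦ ?_
  rw [Real.norm_eq_abs, abs_div, abs_pow, Nat.abs_cast]
  gcongr
  exact Nat.factorial_le_doubleFactorial_two_mul_add_one m

noncomputable def sphericalBesselJTerm (m : ℕ) (z : ℝ) (k : ℕ) : ℝ :=
  (-1) ^ k * z ^ (m + 2 * k) / (2 ^ k * k ! * (2 * (m + k) + 1)‼)

noncomputable def sphericalBesselJ (m : ℕ) (z : ℝ) : ℝ :=
  ∑' k, sphericalBesselJTerm m z k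

lemma abs_sphericalBesselJTerm_le (m : ℕ) (z : ℝ) (k : ℕ) :
    |sphericalBesselJTerm m z k| ≤ |z| ^ m * ((z ^ 2 / 2) ^ k / k !) := by
  have hD : (1 : ℝ) ≤ (2 * (m + k) + 1)‼ := by exact_mod_cast Nat.doubleFactorial_pos _
  have hden : (0 : ℝ) < 2 ^ k * k ! * (2 * (m + k) + 1)‼ := by positivity
  rw [sphericalBesselJTerm, abs_div, abs_of_pos hden, abs_mul, abs_pow, abs_pow, abs_neg, abs_one,
    one_pow, one_mul, pow_add, pow_mul, sq_abs]
  calc |z| ^ m * (z ^ 2) ^ k / (2 ^ k * k ! * (2 * (m + k) + 1)‼)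
      ≤ |z| ^ m * (z ^ 2) ^ k / (2 ^ k * k !) :=
        div_le_div_of_nonneg_left (by positivity) (by positivity) (le_mul_of_one_le_right
          (by positivity) hD)
    _ = |z| ^ m * ((z ^ 2 / 2) ^ k / k !) := by rw [div_pow]; ring

lemma summable_sphericalBesselJTerm (m : ℕ) (z : ℝ) : Summable (sphericalBesselJTerm m z) :=
  .of_norm_bounded ((Real.summable_pow_div_factorial _).mul_left _)
    (abs_sphericalBesselJTerm_le m z)

lemma abs_sphericalBesselJ_le (m : ℕ) (z : ℝ) :
    |sphericalBesselJ m z| ≤ |z| ^ m * exp (z ^ 2 / 2) := by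
  have hexp : HasSum (fun k : ℕ => (z ^ 2 / 2) ^ k / k !) (exp (z ^ 2 / 2)) := by
    rw [Real.exp_eq_exp_ℝ]
    exact NormedSpace.expSeries_div_hasSum_exp _
  exact tsum_of_norm_bounded (f := sphericalBesselJTerm m z) (hexp.mul_left _)
    (abs_sphericalBesselJTerm_le m z)

lemma mul_sphericalBesselJ_zero (z : ℝ) : z * sphericalBesselJ 0 z = sin z := by
  rw [sphericalBesselJ, ← tsum_mul_left, ← (Real.hasSum_sin z).tsum_eq]
  congr 1 with k
  have h := Nat.factorial_eq_mul_doubleFactorial (2 * k)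
  rw [Nat.doubleFactorial_two_mul] at h
  simp only [sphericalBesselJTerm, h, zero_add]
  push_cast
  ring

lemma sq_mul_sphericalBesselJ_one (z : ℝ) :
    z ^ 2 * sphericalBesselJ 1 z = sin z - z * cos z := by
  have hcos : HasSum (fun k : ℕ => (-1) ^ (k + 1) * z ^ (2 * (k + 1)) / (2 * (k + 1))!)
      (cos z - 1) := by
    simpa using (hasSum_nat_add_iff' 1).2 (Real.hasSum_cos z)
  have hsin : HasSum (fun k : ℕ => (-1) ^ (k + 1) * z ^ (2 * (k + 1) + 1) / (2 * (k + 1) + 1)!)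
      (sin z - z) := by
    simpa using (hasSum_nat_add_iff' 1).2 (Real.hasSum_sin z)
  rw [sphericalBesselJ, ← tsum_mul_left]
  convert (hsin.sub (hcos.mul_left z)).tsum_eq using 1
  · congr 1 with k
    have hodd : ((2 * (k + 1) + 1)! : ℝ) = (2 * (k + 1) + 1)‼ * (2 ^ (k + 1) * (k + 1)!) := by
      rw [Nat.factorial_eq_mul_doubleFactorial, Nat.doubleFactorial_two_mul]; push_cast; ring
    have heven : ((2 * (k + 1) + 1)! : ℝ) = (2 * (k + 1) + 1) * (2 * (k + 1))! := by
      push_cast [Nat.factorial_succ]; ring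
    have hk : ((k + 1)! : ℝ) = (k + 1) * k ! := by push_cast [Nat.factorial_succ]; ring
    have hE : ((2 * (k + 1))! : ℝ) =
        (2 * (k + 1) + 1)‼ * (2 ^ (k + 1) * (k + 1)!) / (2 * (k + 1) + 1) := by
      rw [← hodd, heven]; field_simp
    rw [sphericalBesselJTerm, add_comm 1 k, hodd, hE, hk]
    field_simp
    ring
  · ring

lemma mul_sphericalBesselJ_add_two (m : ℕ) (z : ℝ) :
    z * sphericalBesselJ (m + 2) z =
      (2 * m + 3) * sphericalBesselJ (m + 1) z - z * sphericalBesselJ m z := by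
  set F : ℕ → ℝ := fun k ↦
    (2 * m + 3) * sphericalBesselJTerm (m + 1) z k - z * sphericalBesselJTerm m z k
  have hJ₁ := (summable_sphericalBesselJTerm (m + 1) z).mul_left (2 * m + 3 : ℝ)
  have hJ₀ := (summable_sphericalBesselJTerm m z).mul_left z
  have hF : Summable F := hJ₁.sub hJ₀
  have hF0 : F 0 = 0 := by
    have hD : ((2 * (m + 1) + 1)‼ : ℝ) = (2 * m + 3) * (2 * m + 1)‼ := by
      push_cast [show 2 * (m + 1) + 1 = 2 * m + 1 + 2 by ring, Nat.doubleFactorial_add_two]; ring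
    simp only [F, sphericalBesselJTerm, add_zero, mul_zero, hD]
    field_simp
    ring
  have hFsucc (k : ℕ) : F (k + 1) = z * sphericalBesselJTerm (m + 2) z k := by
    have hD : ((2 * (m + k) + 5)‼ : ℝ) = (2 * (m + k) + 5) * (2 * (m + k) + 3)‼ := by
      push_cast [Nat.doubleFactorial_add_two]; ring
    have hk : ((k + 1)! : ℝ) = (k + 1) * k ! := by push_cast [Nat.factorial_succ]; ring
    simp only [F, sphericalBesselJTerm, show 2 * (m + 1 + (k + 1)) + 1 = 2 * (m + k) + 5 by ring,
      show 2 * (m + (k + 1)) + 1 = 2 * (m + k) + 3 by ring,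
      show 2 * (m + 2 + k) + 1 = 2 * (m + k) + 5 by ring, hD, hk]
    field_simp
    ring
  simp only [sphericalBesselJ, ← tsum_mul_left]
  calc ∑' k, z * sphericalBesselJTerm (m + 2) z k = ∑' k, F (k + 1) := by simp only [hFsucc]
    _ = ∑' k, F k := by rw [hF.tsum_eq_zero_add, hF0, zero_add]
    _ = _ := hJ₁.tsum_sub hJ₀

lemma p_add_three (n : ℕ) (x : ℝ) :
    (2 * n + 7) * p (n + 3) x = (2 * n + 3) * p (n + 2) x - x / (2 * n + 5) * p (n + 1) x := by
  rw [p, show 2 * ((n : ℝ) + 3) - 3 = 2 * n + 3 by ring,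
    show 2 * ((n : ℝ) + 3) - 1 = 2 * n + 5 by ring, show 2 * ((n : ℝ) + 3) + 1 = 2 * n + 7 by ring]
  field_simp

-- `p_n = q_{n+1} - q_{n+2}` for `q_n = (2n-1)(2n+1) p_n(x) / x`, and `q_3 = 1`.
lemma sum_range_p_add_two {x : ℝ} (hx : x ≠ 0) (N : ℕ) :
    ∑ n ∈ range N, p (n + 2) x = 1 - (2 * N + 5) * (2 * N + 7) * p (N + 3) x / x := by
  induction N with
  | zero =>
    simp only [range_zero, sum_empty, CharP.cast_eq_zero, mul_zero, zero_add, p, sub_zero]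
    field_simp
    norm_num
  | succ N ih =>
    have h := p_add_three (N + 1) x
    rw [sum_range_succ, ih]
    push_cast at h ⊢
    field_simp at h ⊢
    linear_combination h

lemma p_succ_pi_sq (m : ℕ) :
    p (m + 1) (π ^ 2) = π ^ (m + 2) * sphericalBesselJ m π / (2 * m + 3)‼ := by
  induction m using Nat.twoStepInduction with
  | zero =>
    have h := mul_sphericalBesselJ_zero π
    rw [sin_pi, mul_eq_zero] at h
    simp [p, h.resolve_left pi_ne_zero]
  | one =>
    have h := sq_mul_sphericalBesselJ_one π
    rw [sin_pi, cos_pi] at h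
    rw [show p (1 + 1) (π ^ 2) = π ^ 2 / 15 from rfl, show (2 * 1 + 3)‼ = 15 from rfl]
    linear_combination (-π / 15) * h
  | more m ih₀ ih₁ =>
    have hD₁ : ((2 * (m + 1) + 3)‼ : ℝ) = (2 * m + 5) * (2 * m + 3)‼ := by
      push_cast [show 2 * (m + 1) + 3 = 2 * m + 3 + 2 by ring, Nat.doubleFactorial_add_two]; ring
    have hD₂ : ((2 * (m + 2) + 3)‼ : ℝ) = (2 * m + 7) * ((2 * m + 5) * (2 * m + 3)‼) := by
      push_cast [show 2 * (m + 2) + 3 = 2 * m + 3 + 2 + 2 by ring, Nat.doubleFactorial_add_two]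
      ring
    have hp : p (m + 3) (π ^ 2) = ((2 * m + 3) * p (m + 2) (π ^ 2) -
        π ^ 2 / (2 * m + 5) * p (m + 1) (π ^ 2)) / (2 * m + 7) := by
      rw [← p_add_three]
      field_simp
    have hj : sphericalBesselJ (m + 2) π =
        ((2 * m + 3) * sphericalBesselJ (m + 1) π - π * sphericalBesselJ m π) / π := by
      rw [← mul_sphericalBesselJ_add_two]
      field_simp
    rw [hp, ih₀, ih₁, hD₁, hD₂, hj]
    field_simp
    ring

lemma abs_p_succ_pi_sq_le (m : ℕ) :
    |p (m + 1) (π ^ 2)| ≤ exp (π ^ 2 / 2) * ((π ^ 2) ^ (m + 1) / (2 * (m + 1) + 1)‼) := by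
  have hj := abs_sphericalBesselJ_le m π
  rw [abs_of_pos pi_pos] at hj
  rw [p_succ_pi_sq, abs_div, abs_mul, Nat.abs_cast, abs_pow, abs_of_pos pi_pos]
  calc π ^ (m + 2) * |sphericalBesselJ m π| / (2 * m + 3)‼
      ≤ π ^ (m + 2) * (π ^ m * exp (π ^ 2 / 2)) / (2 * m + 3)‼ := by gcongr
    _ = _ := by rw [show 2 * (m + 1) + 1 = 2 * m + 3 by ring]; ring

lemma tendsto_p_pi_sq_tail :
    Tendsto (fun N : ℕ ↦ (2 * N + 5) * (2 * N + 7) * p (N + 3) (π ^ 2) / π ^ 2) atTop (𝓝 0) := by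
  have hlim := ((summable_nat_add_iff 1).2
    (summable_pow_div_doubleFactorial (π ^ 2))).tendsto_atTop_zero.const_mul
      (exp (π ^ 2 / 2) * π ^ 2)
  rw [mul_zero] at hlim
  refine squeeze_zero_norm (fun N ↦ ?_) hlim
  have hD : ((2 * (N + 2 + 1) + 1)‼ : ℝ) = (2 * N + 5) * (2 * N + 7) * (2 * (N + 1) + 1)‼ := by
    push_cast [show 2 * (N + 2 + 1) + 1 = 2 * (N + 1) + 1 + 2 + 2 by ring,
      Nat.doubleFactorial_add_two]
    ring
  have hbound := abs_p_succ_pi_sq_le (N + 2)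
  rw [hD] at hbound
  rw [Real.norm_eq_abs, abs_div, abs_mul, abs_of_pos (show (0 : ℝ) < (2 * N + 5) * (2 * N + 7) by
    positivity), abs_of_pos (show (0 : ℝ) < π ^ 2 by positivity)]
  calc (2 * N + 5) * (2 * N + 7) * |p (N + 3) (π ^ 2)| / π ^ 2
      ≤ (2 * N + 5) * (2 * N + 7) * (exp (π ^ 2 / 2) *
          ((π ^ 2) ^ (N + 2 + 1) / ((2 * N + 5) * (2 * N + 7) * (2 * (N + 1) + 1)‼))) /
            π ^ 2 := by
        gcongr
    _ = _ := by field_simp; ring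

/-- `∑_{n=2}^∞ p_n(π²)` converges and equals `1`. -/
theorem sum_p_pi_sq : HasSum (fun n : ℕ => p (n + 2) (π^2)) 1 := by
  have hsum : Summable fun n ↦ ‖p (n + 2) (π ^ 2)‖ :=
    .of_nonneg_of_le (fun _ ↦ norm_nonneg _) (fun n ↦ abs_p_succ_pi_sq_le (n + 1))
      (((summable_nat_add_iff 2).2 (summable_pow_div_doubleFactorial (π ^ 2))).mul_left _)
  rw [hasSum_iff_tendsto_nat_of_summable_norm hsum]
  simp_rw [sum_range_p_add_two (pow_ne_zero 2 pi_ne_zero)]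
  simpa using tendsto_const_nhds.sub tendsto_p_pi_sq_tail
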